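/- arXiv:1205.1451 — 3 statements merged into one kernel-verified Lean document; each statement's English description precedes it below -/
import Mathlib

section
/- Let τ = (1+√5)/2, σ = (1−√5)/2, and let α₁ = (−1,0,0), α₂ = ½(τ,1,σ), α₃ = (0,0,−1) in ℝ³. The orbit of the set {α₁, α₂, α₃} under the group of linear isometries of ℝ³ generated by the three reflections s_{α₁}, s_{α₂}, s_{α₃} is exactly the 30-element set consisting of the vectors (±1,0,0), (0,±1,0), (0,0,±1) together with all cyclic permutations of the coordinates of ½(±τ,±1,±σ) (the vertices of an icosidodecahedron, the root system of the Coxeter group H₃), and this 30-element set is invariant under the reflection s_α for every α in it. -/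
noncomputable section

open scoped RealInnerProductSpace

/-- sign predicate: `a = ±1` -/
def pm (a : ℝ) : Prop := a = 1 ∨ a = -1

abbrev E3 := EuclideanSpace ℝ (Fin 3)

def vec3 (a b c : ℝ) : E3 := WithLp.toLp 2 ![a, b, c]

/-- Reflection in the hyperplane orthogonal to `α`:
`λ ↦ λ − 2(⟪λ,α⟫/⟪α,α⟫)α`. -/
def sRefl (α x : E3) : E3 := x - (2 * (⟪x, α⟫ / ⟪α, α⟫)) • α

/-- The group of linear isometries of ℝ³ generated by the reflections `s_α`, `α ∈ S`. -/
def reflGroup (S : Set E3) : Subgroup (E3 ≃ₗᵢ[ℝ] E3) :=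
  Subgroup.closure {g | ∃ α ∈ S, ∀ x, g x = sRefl α x}

/-- The orbit of the set `S` under the group generated by the reflections in elements of `S`. -/
def orbitOf (S : Set E3) : Set E3 :=
  {x | ∃ g ∈ reflGroup S, ∃ r ∈ S, g r = x}

/-- The 6 vertices of an octahedron: `(±1,0,0), (0,±1,0), (0,0,±1)`. -/
def Oct : Set E3 :=
  {x | ∃ a, pm a ∧ (x = vec3 a 0 0 ∨ x = vec3 0 a 0 ∨ x = vec3 0 0 a)}

/-- The 12 vertices of a cuboctahedron: `(1/√2)(±1,±1,0)` and permutations. -/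
def Cuboct : Set E3 :=
  {x | ∃ a b, pm a ∧ pm b ∧
    (x = (Real.sqrt 2)⁻¹ • vec3 a b 0 ∨ x = (Real.sqrt 2)⁻¹ • vec3 a 0 b ∨
      x = (Real.sqrt 2)⁻¹ • vec3 0 a b)}

/-- The golden ratio τ. -/
def gr : ℝ := (1 + Real.sqrt 5) / 2

/-- The Galois conjugate σ of the golden ratio. -/
def gs : ℝ := (1 - Real.sqrt 5) / 2

/-- The vertices `½(±τ,±1,±σ)` and all cyclic permutations of the coordinates. -/
def H3extra : Set E3 :=
  {x | ∃ a b c, pm a ∧ pm b ∧ pm c ∧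
    (x = (2:ℝ)⁻¹ • vec3 (a * gr) b (c * gs) ∨ x = (2:ℝ)⁻¹ • vec3 (c * gs) (a * gr) b ∨
      x = (2:ℝ)⁻¹ • vec3 b (c * gs) (a * gr))}

/-- The 30 vertices of an icosidodecahedron, the root system of H₃. -/
def Icosid : Set E3 := Oct ∪ H3extra

def qmk (a b c d : ℝ) : Quaternion ℝ := ⟨a, b, c, d⟩

/-- The 8 Lipschitz units `±1, ±i, ±j, ±k`. -/
def Lip : Set (Quaternion ℝ) :=
  {x | ∃ a, pm a ∧ (x = qmk a 0 0 0 ∨ x = qmk 0 a 0 0 ∨ x = qmk 0 0 a 0 ∨ x = qmk 0 0 0 a)}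

/-- The 24 Hurwitz units: the Lipschitz units together with `½(±1 ± i ± j ± k)`. -/
def Hur : Set (Quaternion ℝ) :=
  Lip ∪ {x | ∃ a b c d, pm a ∧ pm b ∧ pm c ∧ pm d ∧ x = qmk (a / 2) (b / 2) (c / 2) (d / 2)}

/-- The 24 `dual' quaternions `(1/√2)(±a ± b)` for distinct `a, b ∈ {1, i, j, k}`. -/
def DualHur : Set (Quaternion ℝ) :=
  {x | ∃ a b, pm a ∧ pm b ∧
    (x = qmk (a / Real.sqrt 2) (b / Real.sqrt 2) 0 0 ∨
      x = qmk (a / Real.sqrt 2) 0 (b / Real.sqrt 2) 0 ∨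
      x = qmk (a / Real.sqrt 2) 0 0 (b / Real.sqrt 2) ∨
      x = qmk 0 (a / Real.sqrt 2) (b / Real.sqrt 2) 0 ∨
      x = qmk 0 (a / Real.sqrt 2) 0 (b / Real.sqrt 2) ∨
      x = qmk 0 0 (a / Real.sqrt 2) (b / Real.sqrt 2))}

/-- The 48-element binary octahedral set. -/
def BinOct : Set (Quaternion ℝ) := Hur ∪ DualHur

/-- The coordinate quadruple of a quaternion. -/
def qcoords (x : Quaternion ℝ) : Fin 4 → ℝ := ![x.re, x.imI, x.imJ, x.imK]

/-- The 96 unit quaternions with coordinates `½(0, ±τ, ±1, ±σ)` and all even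
permutations of the four coordinates. -/
def IcoExtra : Set (Quaternion ℝ) :=
  {x | ∃ p ∈ alternatingGroup (Fin 4), ∃ a b c, pm a ∧ pm b ∧ pm c ∧
    ∀ i, qcoords x i = ![0, a * gr, b, c * gs] (p i) / 2}

/-- The 120 icosians. -/
def Icosians : Set (Quaternion ℝ) := Hur ∪ IcoExtra

/-- The map sending a vector of ℝ³ to the corresponding pure quaternion. -/
def iota (x : E3) : Quaternion ℝ := qmk 0 (x 0) (x 1) (x 2)

abbrev E4 := EuclideanSpace ℝ (Fin 4)

/-- Reflection in the hyperplane of ℝ⁴ orthogonal to `α`. -/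
def sRefl4 (α x : E4) : E4 := x - (2 * (⟪x, α⟫ / ⟪α, α⟫)) • α

/-- Regard a quaternion as a vector in ℝ⁴ via its coordinates. -/
def qvec (x : Quaternion ℝ) : E4 := WithLp.toLp 2 ![x.re, x.imI, x.imJ, x.imK]

/-!
Scale every root by 4: the 30 roots become points of `ℤ[√5]³`, and for roots `α = A / 4`,
`x = X / 4` the reflection `s_α x` is `Y / 4` exactly when `8 X - ⟪X, A⟫ A = 8 Y`, an identity
in exact integer arithmetic. That the 30 points are closed under their own reflections, and that
four rounds of the three simple reflections carry the simple roots onto all 30 of them, are then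
finite computations checked by the kernel. The first fact shows that every element of the
reflection group preserves the icosidodecahedron, so the orbit lies inside it; the second gives
the reverse inclusion.
-/

section Reflections

variable {S R : Set E3}

theorem reflection_orthogonal_span_singleton_apply (α x : E3) :
    (ℝ ∙ α)ᗮ.reflection x = sRefl α x := by
  rw [Submodule.reflection_orthogonal_apply, Submodule.reflection_singleton_apply, sRefl,
    RCLike.ofReal_real_eq_id, id_eq, ← real_inner_self_eq_norm_sq, real_inner_comm]
  module

theorem sRefl_sRefl (α x : E3) : sRefl α (sRefl α x) = x := by
  simpa only [reflection_orthogonal_span_singleton_apply] using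
    (ℝ ∙ α)ᗮ.reflection_reflection x

theorem subset_orbitOf : S ⊆ orbitOf S := fun r hr => ⟨1, one_mem _, r, hr, rfl⟩

theorem sRefl_mem_orbitOf {α x : E3} (hα : α ∈ S) (hx : x ∈ orbitOf S) :
    sRefl α x ∈ orbitOf S := by
  obtain ⟨g, hg, r, hr, rfl⟩ := hx
  have hgen : (ℝ ∙ α)ᗮ.reflection ∈ reflGroup S :=
    Subgroup.subset_closure ⟨α, hα, reflection_orthogonal_span_singleton_apply α⟩
  exact ⟨_ * g, mul_mem hgen hg, r, hr, reflection_orthogonal_span_singleton_apply α (g r)⟩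

theorem mapsTo_of_mem_reflGroup (hR : ∀ α ∈ S, ∀ x ∈ R, sRefl α x ∈ R)
    {g : E3 ≃ₗᵢ[ℝ] E3} (hg : g ∈ reflGroup S) : Set.MapsTo g R R := by
  induction hg using Subgroup.closure_induction'' with
  | mem g hg =>
    obtain ⟨α, hα, hgα⟩ := hg
    intro x hx
    rw [hgα]
    exact hR α hα x hx
  | inv_mem g hg =>
    obtain ⟨α, hα, hgα⟩ := hg
    intro x hx
    have hinv : g⁻¹ x = g x := by
      rw [LinearIsometryEquiv.coe_inv, g.symm_apply_eq, hgα, hgα, sRefl_sRefl]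
    rw [hinv, hgα]
    exact hR α hα x hx
  | one => exact Set.mapsTo_id R
  | mul g h _ _ hg hh => exact hg.comp hh

theorem orbitOf_subset (hSR : S ⊆ R) (hR : ∀ α ∈ S, ∀ x ∈ R, sRefl α x ∈ R) :
    orbitOf S ⊆ R := by
  rintro _ ⟨g, hg, r, hr, rfl⟩
  exact mapsTo_of_mem_reflGroup hR hg (hSR hr)

end Reflections

theorem inner_vec3 (a b c a' b' c' : ℝ) :
    ⟪vec3 a b c, vec3 a' b' c'⟫ = a * a' + b * b' + c * c' := by
  simp [vec3, PiLp.inner_apply, Fin.sum_univ_three, mul_comm]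

theorem vec3_smul (r a b c : ℝ) : r • vec3 a b c = vec3 (r * a) (r * b) (r * c) := by
  ext i
  fin_cases i <;> simp [vec3]

theorem vec3_sub (a b c a' b' c' : ℝ) :
    vec3 a b c - vec3 a' b' c' = vec3 (a - a') (b - b') (c - c') := by
  ext i
  fin_cases i <;> simp [vec3]

abbrev ZVec := ℤ√5 × ℤ√5 × ℤ√5

def sqrt5Emb : ℤ√5 →+* ℝ := Zsqrtd.toReal (by norm_num)

theorem sqrt5Emb_mk (p q : ℤ) : sqrt5Emb ⟨p, q⟩ = p + q * √5 := by
  simp [sqrt5Emb]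

def dotZ (X A : ZVec) : ℤ√5 := X.1 * A.1 + X.2.1 * A.2.1 + X.2.2 * A.2.2

def toE3 (v : ZVec) : E3 := vec3 (sqrt5Emb v.1 / 4) (sqrt5Emb v.2.1 / 4) (sqrt5Emb v.2.2 / 4)

@[simp]
theorem toE3_mk (x y z : ℤ√5) :
    toE3 (x, y, z) = vec3 (sqrt5Emb x / 4) (sqrt5Emb y / 4) (sqrt5Emb z / 4) :=
  rfl

theorem inner_toE3 (X A : ZVec) : ⟪toE3 X, toE3 A⟫ = sqrt5Emb (dotZ X A) / 16 := by
  rw [toE3, toE3, inner_vec3, dotZ, map_add, map_add, map_mul, map_mul, map_mul]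
  ring

def reflZ (A X : ZVec) : ZVec := 8 • X - dotZ X A • A

theorem sRefl_toE3 {A X Y : ZVec} (hA : dotZ A A = 16) (h : reflZ A X = 8 • Y) :
    sRefl (toE3 A) (toE3 X) = toE3 Y := by
  have h₁ := congrArg (fun v : ZVec => sqrt5Emb v.1) h
  have h₂ := congrArg (fun v : ZVec => sqrt5Emb v.2.1) h
  have h₃ := congrArg (fun v : ZVec => sqrt5Emb v.2.2) h
  simp only [reflZ, Prod.fst_sub, Prod.snd_sub, Prod.smul_fst, Prod.smul_snd, map_sub, map_nsmul,
    smul_eq_mul, map_mul] at h₁ h₂ h₃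
  have hAA : sqrt5Emb (dotZ A A) = 16 := by rw [hA, map_ofNat]
  rw [sRefl, inner_toE3, inner_toE3, hAA, toE3, toE3, toE3, vec3_smul, vec3_sub]
  congr 1
  · linear_combination h₁ / 32
  · linear_combination h₂ / 32
  · linear_combination h₃ / 32

def signs : List ℤ := [1, -1]

theorem pm_iff_exists_mem_signs (a : ℝ) : pm a ↔ ∃ s ∈ signs, (s : ℝ) = a := by
  simp [pm, signs, eq_comm]

def octZ (p q r : ℤ) : ZVec := (⟨4 * p, 0⟩, ⟨4 * q, 0⟩, ⟨4 * r, 0⟩)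

-- `goldZ a b c = 4 • ½(aτ, b, cσ)`, as `2τ = 1 + √5` and `2σ = 1 - √5`.
def goldZ (a b c : ℤ) : ZVec := (⟨a, a⟩, ⟨2 * b, 0⟩, ⟨c, -c⟩)

def rotZ (v : ZVec) : ZVec := (v.2.2, v.1, v.2.1)

def icosidZ : List ZVec :=
  (signs.flatMap fun a => [octZ a 0 0, octZ 0 a 0, octZ 0 0 a]) ++
  (signs.flatMap fun a => signs.flatMap fun b => signs.flatMap fun c =>
    [goldZ a b c, rotZ (goldZ a b c), rotZ (rotZ (goldZ a b c))])

@[simp]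
theorem toE3_octZ (p q r : ℤ) : toE3 (octZ p q r) = vec3 p q r := by
  simp [octZ, sqrt5Emb_mk]

theorem sqrt5Emb_mk_self (a : ℤ) : sqrt5Emb ⟨a, a⟩ / 4 = 2⁻¹ * (a * gr) := by
  rw [sqrt5Emb_mk, gr]; ring

theorem sqrt5Emb_mk_neg (c : ℤ) : sqrt5Emb ⟨c, -c⟩ / 4 = 2⁻¹ * (c * gs) := by
  rw [sqrt5Emb_mk, gs]; push_cast; ring

theorem sqrt5Emb_mk_two_mul (b : ℤ) : sqrt5Emb ⟨2 * b, 0⟩ / 4 = 2⁻¹ * b := by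
  rw [sqrt5Emb_mk]; push_cast; ring

theorem toE3_goldZ (a b c : ℤ) :
    toE3 (goldZ a b c) = (2:ℝ)⁻¹ • vec3 (a * gr) b (c * gs) ∧
      toE3 (rotZ (goldZ a b c)) = (2:ℝ)⁻¹ • vec3 (c * gs) (a * gr) b ∧
      toE3 (rotZ (rotZ (goldZ a b c))) = (2:ℝ)⁻¹ • vec3 b (c * gs) (a * gr) := by
  simp only [goldZ, rotZ, toE3_mk, vec3_smul, sqrt5Emb_mk_self, sqrt5Emb_mk_neg,
    sqrt5Emb_mk_two_mul, and_self]

theorem mem_icosidZ_iff (v : ZVec) : v ∈ icosidZ ↔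
    (∃ a ∈ signs, v = octZ a 0 0 ∨ v = octZ 0 a 0 ∨ v = octZ 0 0 a) ∨
    ∃ a ∈ signs, ∃ b ∈ signs, ∃ c ∈ signs,
      v = goldZ a b c ∨ v = rotZ (goldZ a b c) ∨ v = rotZ (rotZ (goldZ a b c)) := by
  simp only [icosidZ, List.mem_append, List.mem_flatMap, List.mem_cons, List.not_mem_nil,
    or_false]

theorem toE3_mem_icosid {v : ZVec} (hv : v ∈ icosidZ) : toE3 v ∈ Icosid := by
  have hpm : ∀ s ∈ signs, pm s := fun s hs => (pm_iff_exists_mem_signs _).2 ⟨s, hs, rfl⟩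
  rcases (mem_icosidZ_iff v).1 hv with ⟨a, ha, hv⟩ | ⟨a, ha, b, hb, c, hc, hv⟩
  · refine Or.inl ⟨a, hpm a ha, ?_⟩
    rcases hv with rfl | rfl | rfl <;> simp
  · refine Or.inr ⟨a, b, c, hpm a ha, hpm b hb, hpm c hc, ?_⟩
    obtain ⟨h₁, h₂, h₃⟩ := toE3_goldZ a b c
    rcases hv with rfl | rfl | rfl <;> simp only [h₁, h₂, h₃, true_or, or_true]

theorem exists_toE3_eq_of_mem_icosid {x : E3} (hx : x ∈ Icosid) :
    ∃ v ∈ icosidZ, toE3 v = x := by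
  simp only [mem_icosidZ_iff]
  rcases hx with ⟨a, ha, hx⟩ | ⟨a, b, c, ha, hb, hc, hx⟩
  · obtain ⟨a, ha', rfl⟩ := (pm_iff_exists_mem_signs a).1 ha
    rcases hx with rfl | rfl | rfl
    · exact ⟨octZ a 0 0, Or.inl ⟨a, ha', by simp⟩, by simp⟩
    · exact ⟨octZ 0 a 0, Or.inl ⟨a, ha', by simp⟩, by simp⟩
    · exact ⟨octZ 0 0 a, Or.inl ⟨a, ha', by simp⟩, by simp⟩
  · obtain ⟨a, ha', rfl⟩ := (pm_iff_exists_mem_signs a).1 ha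
    obtain ⟨b, hb', rfl⟩ := (pm_iff_exists_mem_signs b).1 hb
    obtain ⟨c, hc', rfl⟩ := (pm_iff_exists_mem_signs c).1 hc
    obtain ⟨h₁, h₂, h₃⟩ := toE3_goldZ a b c
    rcases hx with rfl | rfl | rfl
    · exact ⟨_, Or.inr ⟨a, ha', b, hb', c, hc', Or.inl rfl⟩, h₁⟩
    · exact ⟨_, Or.inr ⟨a, ha', b, hb', c, hc', Or.inr (Or.inl rfl)⟩, h₂⟩
    · exact ⟨_, Or.inr ⟨a, ha', b, hb', c, hc', Or.inr (Or.inr rfl)⟩, h₃⟩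

theorem icosid_eq_image : Icosid = toE3 '' {v | v ∈ icosidZ} :=
  Set.Subset.antisymm (fun _ hx => exists_toE3_eq_of_mem_icosid hx)
    (Set.image_subset_iff.2 fun _ hv => toE3_mem_icosid hv)

theorem dotZ_self_of_mem_icosidZ : ∀ A ∈ icosidZ, dotZ A A = 16 := by decide +kernel

theorem reflZ_mem_icosidZ :
    ∀ A ∈ icosidZ, ∀ X ∈ icosidZ, ∃ Y ∈ icosidZ, reflZ A X = 8 • Y := by
  decide +kernel

theorem sRefl_mem_icosid {α x : E3} (hα : α ∈ Icosid) (hx : x ∈ Icosid) :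
    sRefl α x ∈ Icosid := by
  rw [icosid_eq_image] at *
  obtain ⟨A, hA, rfl⟩ := hα
  obtain ⟨X, hX, rfl⟩ := hx
  obtain ⟨Y, hY, h⟩ := reflZ_mem_icosidZ A hA X hX
  exact ⟨Y, hY, (sRefl_toE3 (dotZ_self_of_mem_icosidZ A hA) h).symm⟩

def simpleZ : List ZVec := [octZ (-1) 0 0, goldZ 1 1 1, octZ 0 0 (-1)]

theorem image_simpleZ :
    toE3 '' {A | A ∈ simpleZ} = {vec3 (-1) 0 0, (2:ℝ)⁻¹ • vec3 gr 1 gs, vec3 0 0 (-1)} := by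
  ext x
  simp [simpleZ, (toE3_goldZ 1 1 1).1, eq_comm]

def reflStep (G U T : List ZVec) : List ZVec :=
  U.filter fun Y => Y ∈ T ∨ ∃ A ∈ G, ∃ X ∈ T, reflZ A X = 8 • Y

theorem toE3_mem_orbitOf_of_mem_reflStep {G U T : List ZVec} {S : Set E3}
    (hG : ∀ A ∈ G, dotZ A A = 16 ∧ toE3 A ∈ S) (hT : ∀ X ∈ T, toE3 X ∈ orbitOf S)
    {Y : ZVec} (hY : Y ∈ reflStep G U T) : toE3 Y ∈ orbitOf S := by
  obtain ⟨-, hY⟩ := List.mem_filter.1 hY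
  obtain hY | ⟨A, hA, X, hX, h⟩ := of_decide_eq_true hY
  · exact hT Y hY
  · rw [← sRefl_toE3 (hG A hA).1 h]
    exact sRefl_mem_orbitOf (hG A hA).2 (hT X hX)

theorem toE3_mem_orbitOf_of_mem_iterate_reflStep {G U : List ZVec}
    (hG : ∀ A ∈ G, dotZ A A = 16) (n : ℕ) :
    ∀ Y ∈ (reflStep G U)^[n] G, toE3 Y ∈ orbitOf (toE3 '' {A | A ∈ G}) := by
  induction n with
  | zero => exact fun Y hY => subset_orbitOf ⟨Y, hY, rfl⟩
  | succ n ih =>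
    rw [Function.iterate_succ_apply']
    exact fun Y =>
      toE3_mem_orbitOf_of_mem_reflStep (fun A hA => ⟨hG A hA, Set.mem_image_of_mem toE3 hA⟩) ih

theorem simpleZ_subset_icosidZ : ∀ A ∈ simpleZ, A ∈ icosidZ := by decide +kernel

theorem icosidZ_subset_iterate_reflStep :
    ∀ Y ∈ icosidZ, Y ∈ (reflStep simpleZ icosidZ)^[4] simpleZ := by
  decide +kernel

/-- The orbit of the simple roots `(−1,0,0), ½(τ,1,σ), (0,0,−1)` of `H₃` under the group of
linear isometries generated by the three corresponding reflections is exactly the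
icosidodecahedron (the octahedron together with all cyclic permutations of `½(±τ,±1,±σ)`),
and this set is invariant under all of its own reflections. -/
theorem H3_rootSystem :
    orbitOf {vec3 (-1) 0 0, (2:ℝ)⁻¹ • vec3 gr 1 gs, vec3 0 0 (-1)} = Icosid ∧
      ∀ α ∈ Icosid, ∀ x ∈ Icosid, sRefl α x ∈ Icosid := by
  have hsimple : {vec3 (-1) 0 0, (2:ℝ)⁻¹ • vec3 gr 1 gs, vec3 0 0 (-1)} ⊆ Icosid := by
    rw [← image_simpleZ, icosid_eq_image]
    exact Set.image_mono simpleZ_subset_icosidZ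
  refine ⟨(orbitOf_subset hsimple fun α hα _ => sRefl_mem_icosid (hsimple hα)).antisymm ?_,
    fun α hα x hx => sRefl_mem_icosid hα hx⟩
  rw [icosid_eq_image, Set.image_subset_iff, ← image_simpleZ]
  intro Y hY
  exact toE3_mem_orbitOf_of_mem_iterate_reflStep
    (fun A hA => dotZ_self_of_mem_icosidZ A (simpleZ_subset_icosidZ A hA)) 4 Y
    (icosidZ_subset_iterate_reflStep Y hY)
end
end

section
/- Let Φ be the 6-element set {(±1,0,0), (0,±1,0), (0,0,±1)} ⊂ ℝ³ (the root system of A₁×A₁×A₁). Then the set of quaternion products {ι(p) · ι(q) : p, q ∈ Φ} is exactly the 8-element set of Lipschitz units {±1, ±i, ±j, ±k}; that is, the spinors generated by the A₁×A₁×A₁ Coxeter reflections realise the quaternion group, the root system of A₁×A₁×A₁×A₁. -/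
noncomputable section

open scoped RealInnerProductSpace

/-! The Lipschitz units are exactly the quaternions with integer coordinates and norm one, so they
form a multiplicatively closed set (the norm is multiplicative), and `ι` maps the octahedron into
it. Conversely every Lipschitz unit is a product of two roots:
`±1 = i (∓i)`, `±i = j (±k)`, `±j = k (±i)`, `±k = i (±j)`. -/

lemma pm_iff_mul_self_eq_one {a : ℝ} : pm a ↔ a * a = 1 :=
  mul_self_eq_one_iff.symm

lemma pm_neg {a : ℝ} (ha : pm a) : pm (-a) := by
  rw [pm_iff_mul_self_eq_one] at ha ⊢
  simpa using ha

lemma pm.exists_intCast_eq {a : ℝ} (ha : pm a) : ∃ n : ℤ, (n : ℝ) = a := by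
  rcases ha with rfl | rfl
  exacts [⟨1, Int.cast_one⟩, ⟨-1, by simp⟩]

lemma Int.eq_zero_or_one_le_sq (n : ℤ) : n = 0 ∨ 1 ≤ n ^ 2 := by
  rcases eq_or_ne n 0 with h | h
  · exact .inl h
  · exact .inr (by nlinarith [Int.one_le_abs h, sq_abs n])

lemma Int.sq_eq_one_of_sq_add_sq_add_sq_add_sq_eq_one {a b c d : ℤ}
    (h : a ^ 2 + b ^ 2 + c ^ 2 + d ^ 2 = 1) :
    (a ^ 2 = 1 ∧ b = 0 ∧ c = 0 ∧ d = 0) ∨ (a = 0 ∧ b ^ 2 = 1 ∧ c = 0 ∧ d = 0) ∨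
      (a = 0 ∧ b = 0 ∧ c ^ 2 = 1 ∧ d = 0) ∨ (a = 0 ∧ b = 0 ∧ c = 0 ∧ d ^ 2 = 1) := by
  rcases a.eq_zero_or_one_le_sq with rfl | ha <;> rcases b.eq_zero_or_one_le_sq with rfl | hb <;>
    rcases c.eq_zero_or_one_le_sq with rfl | hc <;> rcases d.eq_zero_or_one_le_sq with rfl | hd <;>
    omega

lemma qmk_mul (a b c d a' b' c' d' : ℝ) :
    qmk a b c d * qmk a' b' c' d' =
      qmk (a * a' - b * b' - c * c' - d * d') (a * b' + b * a' + c * d' - d * c')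
        (a * c' - b * d' + c * a' + d * b') (a * d' + b * c' - c * b' + d * a') := by
  ext <;> simp only [Quaternion.re_mul, Quaternion.imI_mul, Quaternion.imJ_mul, Quaternion.imK_mul] <;>
    rfl

lemma normSq_qmk (a b c d : ℝ) : Quaternion.normSq (qmk a b c d) = a ^ 2 + b ^ 2 + c ^ 2 + d ^ 2 :=
  Quaternion.normSq_def' _

def IsLipschitzInt (x : Quaternion ℝ) : Prop :=
  ∃ a b c d : ℤ, x = qmk a b c d

lemma IsLipschitzInt.mul {x y : Quaternion ℝ} (hx : IsLipschitzInt x) (hy : IsLipschitzInt y) :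
    IsLipschitzInt (x * y) := by
  obtain ⟨a, b, c, d, rfl⟩ := hx
  obtain ⟨a', b', c', d', rfl⟩ := hy
  exact ⟨a * a' - b * b' - c * c' - d * d', a * b' + b * a' + c * d' - d * c',
    a * c' - b * d' + c * a' + d * b', a * d' + b * c' - c * b' + d * a', by
      rw [qmk_mul]; push_cast; rfl⟩

lemma mem_Lip_iff {x : Quaternion ℝ} : x ∈ Lip ↔ IsLipschitzInt x ∧ Quaternion.normSq x = 1 := by
  constructor
  · rintro ⟨a, ha, hx⟩
    obtain ⟨n, rfl⟩ := ha.exists_intCast_eq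
    have hn := pm_iff_mul_self_eq_one.mp ha
    rcases hx with rfl | rfl | rfl | rfl
    exacts [⟨⟨n, 0, 0, 0, by simp⟩, by simp [normSq_qmk, sq, hn]⟩,
      ⟨⟨0, n, 0, 0, by simp⟩, by simp [normSq_qmk, sq, hn]⟩,
      ⟨⟨0, 0, n, 0, by simp⟩, by simp [normSq_qmk, sq, hn]⟩,
      ⟨⟨0, 0, 0, n, by simp⟩, by simp [normSq_qmk, sq, hn]⟩]
  · rintro ⟨⟨a, b, c, d, rfl⟩, h⟩
    have hint : a ^ 2 + b ^ 2 + c ^ 2 + d ^ 2 = 1 := by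
      rw [normSq_qmk] at h
      exact_mod_cast h
    have hpm {n : ℤ} (hn : n ^ 2 = 1) : pm n := pm_iff_mul_self_eq_one.mpr (by
      rw [← sq]; exact_mod_cast hn)
    rcases Int.sq_eq_one_of_sq_add_sq_add_sq_add_sq_eq_one hint with
      ⟨ha, rfl, rfl, rfl⟩ | ⟨rfl, hb, rfl, rfl⟩ | ⟨rfl, rfl, hc, rfl⟩ | ⟨rfl, rfl, rfl, hd⟩
    exacts [⟨a, hpm ha, by simp⟩, ⟨b, hpm hb, by simp⟩, ⟨c, hpm hc, by simp⟩, ⟨d, hpm hd, by simp⟩]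

lemma mul_mem_Lip {x y : Quaternion ℝ} (hx : x ∈ Lip) (hy : y ∈ Lip) : x * y ∈ Lip := by
  rw [mem_Lip_iff] at *
  exact ⟨hx.1.mul hy.1, by rw [map_mul, hx.2, hy.2, one_mul]⟩

lemma iota_vec3 (a b c : ℝ) : iota (vec3 a b c) = qmk 0 a b c := rfl

lemma iota_mem_Lip {p : E3} (hp : p ∈ Oct) : iota p ∈ Lip := by
  obtain ⟨a, ha, rfl | rfl | rfl⟩ := hp
  exacts [⟨a, ha, .inr (.inl rfl)⟩, ⟨a, ha, .inr (.inr (.inl rfl))⟩, ⟨a, ha, .inr (.inr (.inr rfl))⟩]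

lemma exists_mem_Oct_mul_eq {z : Quaternion ℝ} (hz : z ∈ Lip) :
    ∃ p ∈ Oct, ∃ q ∈ Oct, z = iota p * iota q := by
  have pm_one : pm 1 := .inl rfl
  obtain ⟨a, ha, rfl | rfl | rfl | rfl⟩ := hz
  · exact ⟨vec3 1 0 0, ⟨1, pm_one, .inl rfl⟩, vec3 (-a) 0 0, ⟨-a, pm_neg ha, .inl rfl⟩, by
      simp [iota_vec3, qmk_mul]⟩
  · exact ⟨vec3 0 1 0, ⟨1, pm_one, .inr (.inl rfl)⟩, vec3 0 0 a, ⟨a, ha, .inr (.inr rfl)⟩, by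
      simp [iota_vec3, qmk_mul]⟩
  · exact ⟨vec3 0 0 1, ⟨1, pm_one, .inr (.inr rfl)⟩, vec3 a 0 0, ⟨a, ha, .inl rfl⟩, by
      simp [iota_vec3, qmk_mul]⟩
  · exact ⟨vec3 1 0 0, ⟨1, pm_one, .inl rfl⟩, vec3 0 a 0, ⟨a, ha, .inr (.inl rfl)⟩, by
      simp [iota_vec3, qmk_mul]⟩

/-- The products of pairs of pure quaternions corresponding to roots of `A₁ × A₁ × A₁`
(the octahedron) are exactly the 8 Lipschitz units: the spinors generated by the
`A₁ × A₁ × A₁` Coxeter reflections realise the quaternion group, the root system of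
`A₁ × A₁ × A₁ × A₁`. -/
theorem A1xA1xA1_induces_A1fourth :
    {z : Quaternion ℝ | ∃ p ∈ Oct, ∃ q ∈ Oct, z = iota p * iota q} = Lip := by
  ext z
  constructor
  · rintro ⟨p, hp, q, hq, rfl⟩
    exact mul_mem_Lip (iota_mem_Lip hp) (iota_mem_Lip hq)
  · exact exists_mem_Oct_mul_eq
end
end

section
/- The purely imaginary icosians (those with zero real part) are exactly the 30 pure quaternions ι(α) where α ranges over the H₃ root system, i.e. over the vectors (±1,0,0), (0,±1,0), (0,0,±1) and all cyclic permutations of the coordinates of ½(±τ,±1,±σ); thus the rank-3 root system of H₃ is realised inside the binary icosahedral group as its pure quaternion elements. -/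
noncomputable section

open scoped RealInnerProductSpace

/-! The half-integral Hurwitz units `½(±1 ± i ± j ± k)` have nonzero real part, so the pure
Hurwitz units are `±i, ±j, ±k`. An element of the 96-element part, with coordinates an even
permutation `p` of `½(0, ±τ, ±1, ±σ)`, has zero real part exactly when `p` fixes the first
coordinate; the even permutations doing so are the identity and the two 3-cycles of the
imaginary coordinates, and these produce the three cyclic forms of `½(±τ, ±1, ±σ)`. -/

lemma pm_ne_zero {a : ℝ} (ha : pm a) : a ≠ 0 := by
  rcases ha with rfl | rfl <;> norm_num

lemma gr_ne_zero : gr ≠ 0 := by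
  have := Real.sqrt_nonneg 5
  unfold gr
  positivity

lemma gs_ne_zero : gs ≠ 0 := by
  have : (1 : ℝ) < Real.sqrt 5 := by
    rw [Real.lt_sqrt zero_le_one]
    norm_num
  unfold gs
  linarith

lemma forall_qcoords_eq_iff {x : Quaternion ℝ} {f : Fin 4 → ℝ} :
    (∀ i, qcoords x i = f i) ↔ x = qmk (f 0) (f 1) (f 2) (f 3) := by
  constructor
  · intro h
    ext
    exacts [h 0, h 1, h 2, h 3]
  · rintro rfl i
    fin_cases i <;> rfl

lemma iota_re (v : E3) : (iota v).re = 0 := rfl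

lemma iota_smul_vec3 (r a b c : ℝ) :
    iota (r • vec3 a b c) = qmk 0 (r * a) (r * b) (r * c) := rfl

lemma sep_re_eq_zero_Lip : {x ∈ Lip | x.re = 0} = iota '' Oct := by
  ext x
  constructor
  · rintro ⟨⟨a, ha, rfl | rfl | rfl | rfl⟩, hre⟩
    · exact absurd hre (pm_ne_zero ha)
    · exact ⟨_, ⟨a, ha, Or.inl rfl⟩, iota_vec3 _ _ _⟩
    · exact ⟨_, ⟨a, ha, Or.inr (Or.inl rfl)⟩, iota_vec3 _ _ _⟩
    · exact ⟨_, ⟨a, ha, Or.inr (Or.inr rfl)⟩, iota_vec3 _ _ _⟩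
  · rintro ⟨v, ⟨a, ha, rfl | rfl | rfl⟩, rfl⟩
    · exact ⟨⟨a, ha, Or.inr (Or.inl rfl)⟩, rfl⟩
    · exact ⟨⟨a, ha, Or.inr (Or.inr (Or.inl rfl))⟩, rfl⟩
    · exact ⟨⟨a, ha, Or.inr (Or.inr (Or.inr rfl))⟩, rfl⟩

lemma sep_re_eq_zero_Hur : {x ∈ Hur | x.re = 0} = iota '' Oct := by
  rw [Hur]
  refine Set.sep_union.trans ?_
  rw [sep_re_eq_zero_Lip, Set.union_eq_left]
  rintro _ ⟨⟨a, b, c, d, ha, -, -, -, rfl⟩, hre⟩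
  exact absurd hre (div_ne_zero (pm_ne_zero ha) two_ne_zero)

def icoCoords (a b c : ℝ) : Fin 4 → ℝ := ![0, a * gr, b, c * gs]

def icoQuat (p : Equiv.Perm (Fin 4)) (a b c : ℝ) : Quaternion ℝ :=
  qmk (icoCoords a b c (p 0) / 2) (icoCoords a b c (p 1) / 2) (icoCoords a b c (p 2) / 2)
    (icoCoords a b c (p 3) / 2)

lemma mem_IcoExtra_iff {x : Quaternion ℝ} :
    x ∈ IcoExtra ↔ ∃ p ∈ alternatingGroup (Fin 4), ∃ a b c, pm a ∧ pm b ∧ pm c ∧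
      x = icoQuat p a b c := by
  simp only [IcoExtra, Set.mem_ofPred_eq, forall_qcoords_eq_iff]
  rfl

lemma icoCoords_eq_zero_iff {a b c : ℝ} (ha : pm a) (hb : pm b) (hc : pm c) (j : Fin 4) :
    icoCoords a b c j = 0 ↔ j = 0 := by
  fin_cases j
  · simp [icoCoords]
  · simpa [icoCoords] using mul_ne_zero (pm_ne_zero ha) gr_ne_zero
  · simpa [icoCoords] using pm_ne_zero hb
  · simpa [icoCoords] using mul_ne_zero (pm_ne_zero hc) gs_ne_zero

def rot3 : Equiv.Perm (Fin 4) := ⟨![0, 2, 3, 1], ![0, 3, 1, 2], by decide, by decide⟩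

lemma rot3_mem_alternatingGroup : rot3 ∈ alternatingGroup (Fin 4) := by
  rw [Equiv.Perm.mem_alternatingGroup]
  decide

lemma eq_one_or_rot3_of_apply_zero {p : Equiv.Perm (Fin 4)} (hp : p ∈ alternatingGroup (Fin 4))
    (h0 : p 0 = 0) : p = 1 ∨ p = rot3 ∨ p = rot3⁻¹ := by
  rw [Equiv.Perm.mem_alternatingGroup] at hp
  revert p
  decide

lemma icoQuat_eq_iota (a b c : ℝ) :
    icoQuat 1 a b c = iota ((2 : ℝ)⁻¹ • vec3 (a * gr) b (c * gs)) ∧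
    icoQuat rot3 a b c = iota ((2 : ℝ)⁻¹ • vec3 b (c * gs) (a * gr)) ∧
    icoQuat rot3⁻¹ a b c = iota ((2 : ℝ)⁻¹ • vec3 (c * gs) (a * gr) b) := by
  refine ⟨?_, ?_, ?_⟩ <;>
  · rw [iota_smul_vec3]
    ext <;> simp [icoQuat, icoCoords, qmk, rot3] <;> ring

lemma sep_re_eq_zero_IcoExtra : {x ∈ IcoExtra | x.re = 0} = iota '' H3extra := by
  ext x
  simp only [mem_IcoExtra_iff, Set.mem_image]
  constructor
  · rintro ⟨⟨p, hp, a, b, c, ha, hb, hc, rfl⟩, hre⟩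
    have hp0 : p 0 = 0 :=
      (icoCoords_eq_zero_iff ha hb hc _).1 (div_eq_zero_iff.1 hre |>.resolve_right two_ne_zero)
    obtain ⟨h1, hrot, hrot'⟩ := icoQuat_eq_iota a b c
    rcases eq_one_or_rot3_of_apply_zero hp hp0 with rfl | rfl | rfl
    · exact ⟨_, ⟨a, b, c, ha, hb, hc, Or.inl rfl⟩, h1.symm⟩
    · exact ⟨_, ⟨a, b, c, ha, hb, hc, Or.inr (Or.inr rfl)⟩, hrot.symm⟩
    · exact ⟨_, ⟨a, b, c, ha, hb, hc, Or.inr (Or.inl rfl)⟩, hrot'.symm⟩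
  · rintro ⟨v, ⟨a, b, c, ha, hb, hc, hv⟩, rfl⟩
    refine ⟨?_, iota_re v⟩
    obtain ⟨h1, hrot, hrot'⟩ := icoQuat_eq_iota a b c
    rcases hv with rfl | rfl | rfl
    · exact ⟨1, one_mem _, a, b, c, ha, hb, hc, h1.symm⟩
    · exact ⟨_, inv_mem rot3_mem_alternatingGroup, a, b, c, ha, hb, hc, hrot'.symm⟩
    · exact ⟨_, rot3_mem_alternatingGroup, a, b, c, ha, hb, hc, hrot.symm⟩

/-- The purely imaginary icosians are exactly the images under `ι` of the 30 roots of
`H₃` (the icosidodecahedron): the rank-3 root system of `H₃` is realised inside the binary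
icosahedral group as its pure quaternion elements. -/
theorem pure_icosians_eq_H3_roots :
    {x ∈ Icosians | x.re = 0} = iota '' Icosid := by
  rw [Icosians, Icosid, Set.image_union, ← sep_re_eq_zero_Hur, ← sep_re_eq_zero_IcoExtra]
  exact Set.sep_union
end
end
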